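/- Let a ∈ C_K with |a| > 1, set R = |a|^{−1/(p−1)}, let m ≥ 1 be an integer, and set r = R^{1−p^{−m}}. Then D̄_1(0) ⊆ φ_a^m(D̄_r(0)); in particular, there exists x ∈ C_K with |x| = r and φ_a^m(x) = 1. -/

import Mathlib

/-- The polynomial map `φ_a(z) = (1-a) z^(p+1) + a z^p`. -/
def phi {K : Type*} [Field K] (p : ℕ) (a : K) (z : K) : K :=
  (1 - a) * z ^ (p + 1) + a * z ^ p

/-! The constant term of `φ_a(z) - y` has norm `‖y‖` and its leading coefficient has norm `‖a‖`,
so for `‖y‖ < ‖a‖` the product of its roots has norm `< 1` and some root `x` has `‖x‖ < 1`.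
On the open unit disk the term `a z^p` dominates `φ_a`, whence `‖y‖ = ‖a‖ ‖x‖^p`. Iterating
from `‖y‖ ≤ 1` gives a preimage under `φ_a^m` with
`‖x‖^(p^m) ‖a‖^(1 + p + ⋯ + p^(m-1)) = ‖y‖`, and `r` is precisely the radius with
`r^(p^m) ‖a‖^(1 + p + ⋯ + p^(m-1)) = 1`. -/

open Polynomial

lemma Multiset.exists_norm_lt_one_of_norm_prod_lt_one {R : Type*} [SeminormedCommRing R]
    [NormOneClass R] [NormMulClass R] {s : Multiset R} (h : ‖s.prod‖ < 1) :
    ∃ x ∈ s, ‖x‖ < 1 := by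
  by_contra! hs
  exact h.not_ge <| Multiset.prod_induction (fun x => 1 ≤ ‖x‖) s
    (fun x y hx hy => by rw [norm_mul]; exact one_le_mul_of_one_le_of_one_le hx hy)
    norm_one.ge hs

section Ultrametric

variable {K : Type*} [NormedField K] [IsUltrametricDist K]

lemma norm_one_sub_of_one_lt_norm {a : K} (ha : 1 < ‖a‖) : ‖1 - a‖ = ‖a‖ := by
  rw [sub_eq_add_neg, IsUltrametricDist.norm_add_eq_max_of_norm_ne_norm (by simpa using ha.ne),
    norm_one, norm_neg, max_eq_right ha.le]

lemma norm_phi_of_norm_lt_one {p : ℕ} (hp : 0 < p) {a : K} (ha : 1 < ‖a‖) {x : K}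
    (hx : ‖x‖ < 1) : ‖phi p a x‖ = ‖a‖ * ‖x‖ ^ p := by
  rcases eq_or_ne x 0 with rfl | hx0
  · simp [phi, hp.ne']
  have hlt : ‖(1 - a) * x ^ (p + 1)‖ < ‖a * x ^ p‖ := by
    rw [norm_mul, norm_mul, norm_pow, norm_pow, norm_one_sub_of_one_lt_norm ha, pow_succ,
      ← mul_assoc]
    exact mul_lt_of_lt_one_right (by positivity) hx
  rw [phi, IsUltrametricDist.norm_add_eq_max_of_norm_ne_norm hlt.ne, max_eq_right hlt.le,
    norm_mul, norm_pow]

variable [IsAlgClosed K]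

lemma exists_phi_eq_of_norm_lt {p : ℕ} (hp : 0 < p) {a : K} (ha : 1 < ‖a‖) {y : K}
    (hy : ‖y‖ < ‖a‖) : ∃ x, ‖x‖ < 1 ∧ phi p a x = y := by
  have h1a : ‖1 - a‖ = ‖a‖ := norm_one_sub_of_one_lt_norm ha
  have h1a0 : (1 : K) - a ≠ 0 := norm_pos_iff.mp (h1a ▸ one_pos.trans ha)
  set P : K[X] := C (1 - a) * X ^ (p + 1) + C a * X ^ p - C y
  have hdeg : P.natDegree = p + 1 := by unfold P; compute_degree!
  have hlead : P.leadingCoeff = 1 - a := by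
    rw [leadingCoeff, hdeg]
    simp only [P, coeff_sub, coeff_add, coeff_C_mul, coeff_X_pow, coeff_C]
    simp
  have hcoeff : P.coeff 0 = -y := by simp [P, coeff_X_pow, hp.ne]
  have hprod : ‖y‖ = ‖a‖ * ‖P.roots.prod‖ := by
    have := congrArg norm (IsAlgClosed.splits P).coeff_zero_eq_leadingCoeff_mul_prod_roots
    simpa [hcoeff, hlead, h1a] using this
  obtain ⟨x, hxP, hx⟩ : ∃ x ∈ P.roots, ‖x‖ < 1 := by
    refine Multiset.exists_norm_lt_one_of_norm_prod_lt_one ?_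
    by_contra! h
    nlinarith
  refine ⟨x, hx, ?_⟩
  have := (isRoot_of_mem_roots hxP).eq_zero
  simp only [P, eval_sub, eval_add, eval_mul, eval_C, eval_pow, eval_X] at this
  exact sub_eq_zero.mp this

lemma exists_iterate_phi_eq {p : ℕ} (hp : 0 < p) {a : K} (ha : 1 < ‖a‖) (m : ℕ) {y : K}
    (hy : ‖y‖ ≤ 1) :
    ∃ x, (phi p a)^[m] x = y ∧ ‖x‖ ^ p ^ m * ‖a‖ ^ (∑ i ∈ Finset.range m, p ^ i) = ‖y‖ := by
  induction m generalizing y with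
  | zero => exact ⟨y, rfl, by simp⟩
  | succ m ih =>
    obtain ⟨z, hz, rfl⟩ := exists_phi_eq_of_norm_lt hp ha (hy.trans_lt ha)
    obtain ⟨x, rfl, hx⟩ := ih hz.le
    refine ⟨x, Function.iterate_succ_apply' .., ?_⟩
    rw [norm_phi_of_norm_lt_one hp ha hz, ← hx, geom_sum_succ, pow_succ, pow_add, pow_mul,
      pow_mul]
    ring

end Ultrametric

lemma rpow_rpow_pow_eq_inv_pow_geom_sum {A : ℝ} (hA : 0 < A) {q : ℕ} (hq : 1 < q) (m : ℕ) :
    ((A ^ (-(1 : ℝ) / ((q : ℝ) - 1))) ^ ((1 : ℝ) - (q : ℝ) ^ (-(m : ℤ)))) ^ q ^ m =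
      (A ^ (∑ i ∈ Finset.range m, q ^ i))⁻¹ := by
  refine eq_inv_of_mul_eq_one_left ?_
  have hq' : (1 : ℝ) < q := by exact_mod_cast hq
  have hsum : ((∑ i ∈ Finset.range m, q ^ i : ℕ) : ℝ) = ((q : ℝ) ^ m - 1) / ((q : ℝ) - 1) := by
    push_cast; exact geom_sum_eq hq'.ne' m
  rw [← Real.rpow_natCast _ (q ^ m), ← Real.rpow_natCast A, ← Real.rpow_mul hA.le,
    ← Real.rpow_mul (by positivity), ← Real.rpow_add hA, hsum]
  convert Real.rpow_zero A using 2
  have : (q : ℝ) ^ (-(m : ℤ)) * (q : ℝ) ^ m = 1 := by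
    rw [zpow_neg, zpow_natCast, inv_mul_cancel₀ (by positivity)]
  push_cast
  rw [mul_assoc, sub_mul, one_mul, this]
  ring

theorem closedBall_subset_iterate_image_general
    {K : Type*} [NontriviallyNormedField K] [IsUltrametricDist K]
    [IsAlgClosed K]
    (p : ℕ) (hp : p.Prime)
    (a : K) (ha : 1 < ‖a‖) (R : ℝ)
    (hR : R = ‖a‖ ^ (-(1 : ℝ) / ((p : ℝ) - 1)))
    (m : ℕ) (r : ℝ)
    (hr : r = R ^ ((1 : ℝ) - (p : ℝ) ^ (-(m : ℤ)))) :
    Metric.closedBall (0 : K) 1 ⊆ (phi p a)^[m] '' Metric.closedBall (0 : K) r ∧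
      ∃ x : K, ‖x‖ = r ∧ (phi p a)^[m] x = 1 := by
  have hr0 : 0 ≤ r := by rw [hr, hR]; positivity
  have hN : p ^ m ≠ 0 := pow_ne_zero m hp.ne_zero
  have hpre (y : K) (hy : ‖y‖ ≤ 1) :
      ∃ x, (phi p a)^[m] x = y ∧ ‖x‖ ^ p ^ m = ‖y‖ * r ^ p ^ m := by
    obtain ⟨x, hx, hxy⟩ := exists_iterate_phi_eq hp.pos ha m hy
    refine ⟨x, hx, ?_⟩
    rw [hr, hR, rpow_rpow_pow_eq_inv_pow_geom_sum (one_pos.trans ha) hp.one_lt,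
      eq_mul_inv_iff_mul_eq₀ (by positivity), hxy]
  refine ⟨fun y hy => ?_, ?_⟩
  · obtain ⟨x, hx, hxy⟩ := hpre y (mem_closedBall_zero_iff.mp hy)
    refine ⟨x, mem_closedBall_zero_iff.mpr ?_, hx⟩
    refine (pow_le_pow_iff_left₀ (norm_nonneg x) hr0 hN).mp ?_
    exact hxy ▸ mul_le_of_le_one_left (by positivity) (mem_closedBall_zero_iff.mp hy)
  · obtain ⟨x, hx, hxy⟩ := hpre 1 norm_one.le
    exact ⟨x, (pow_left_inj₀ (norm_nonneg x) hr0 hN).mp (by rwa [norm_one, one_mul] at hxy), hx⟩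

/-- For `|a| > 1`, `R = |a|^{-1/(p-1)}`, `m ≥ 1` and `r = R^{1-p^{-m}}`, the image
`φ_a^m(D̄_r(0))` contains `D̄_1(0)`; in particular there is `x` with `|x| = r` and
`φ_a^m(x) = 1`. -/
theorem closedBall_subset_iterate_image
    {K : Type*} [NontriviallyNormedField K] [IsUltrametricDist K]
    [CompleteSpace K] [IsAlgClosed K]
    (p : ℕ) (hp : p.Prime) (hpK : ‖(p : K)‖ < 1)
    (a : K) (ha : 1 < ‖a‖) (R : ℝ)
    (hR : R = ‖a‖ ^ (-(1 : ℝ) / ((p : ℝ) - 1)))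
    (m : ℕ) (hm : 1 ≤ m) (r : ℝ)
    (hr : r = R ^ ((1 : ℝ) - (p : ℝ) ^ (-(m : ℤ)))) :
    Metric.closedBall (0 : K) 1 ⊆ (phi p a)^[m] '' Metric.closedBall (0 : K) r ∧
      ∃ x : K, ‖x‖ = r ∧ (phi p a)^[m] x = 1 :=
  closedBall_subset_iterate_image_general p hp a ha R hR m r hr
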